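/- arXiv:2510.23754 — 2 statements merged into one kernel-verified Lean document; each statement's English description precedes it below -/
import Mathlib

section
/- If a measurable set Ω ⊆ ℝ tiles ℝ by translations by {0, 1, …, p−1} (i.e., the sets Ω, Ω+1, …, Ω+(p−1) partition ℝ up to measure zero), then Ω + pk ⊆ Ω up to measure zero for every integer k. -/
open MeasureTheory Set
noncomputable section

/-- Translate of a set of reals by `t`. -/
def tr (t : ℝ) (A : Set ℝ) : Set ℝ := (fun x => x + t) '' A

/-- `Ω` tiles `ℝ` by translations by `{0, 1, …, p-1}`: the translates are pairwise
disjoint up to measure zero and cover `ℝ` up to measure zero. -/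
def TilesByFin (Ω : Set ℝ) (p : ℕ) : Prop :=
  (∀ j j' : ℕ, j < p → j' < p → j ≠ j' →
      volume (tr (j : ℝ) Ω ∩ tr (j' : ℝ) Ω) = 0) ∧
  volume ((⋃ j ∈ Finset.range p, tr (j : ℝ) Ω)ᶜ) = 0

lemma mem_tr {t : ℝ} {A : Set ℝ} {x : ℝ} : x ∈ tr t A ↔ x - t ∈ A := by
  constructor
  · rintro ⟨y, hy, rfl⟩; simpa using hy
  · intro h; exact ⟨x - t, h, by ring⟩

lemma tr_eq (t : ℝ) (A : Set ℝ) : tr t A = (fun x => x + (-t)) ⁻¹' A := by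
  ext x; simp [mem_tr, sub_eq_add_neg]

lemma vol_tr (t : ℝ) (A : Set ℝ) : volume (tr t A) = volume A := by
  rw [tr_eq]; exact measure_preimage_add_right volume (-t) A

lemma tr_zero (A : Set ℝ) : tr 0 A = A := by ext x; simp [mem_tr]

/-- Step lemma: a.e. invariance composes. -/
lemma tr_step {Ω : Set ℝ} (a b : ℝ) (h1 : volume (tr a Ω \ Ω) = 0)
    (h2 : volume (tr b Ω \ Ω) = 0) : volume (tr (a + b) Ω \ Ω) = 0 := by
  have hsub : tr (a + b) Ω \ Ω ⊆ tr b (tr a Ω \ Ω) ∪ (tr b Ω \ Ω) := by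
    intro x hx
    rcases hx with ⟨hx1, hx2⟩
    by_cases hb : x - b ∈ Ω
    · exact Or.inr ⟨mem_tr.2 hb, hx2⟩
    · refine Or.inl (mem_tr.2 ⟨mem_tr.2 ?_, hb⟩)
      have : x - b - a = x - (a + b) := by ring
      rw [this]; exact mem_tr.1 hx1
  refine measure_mono_null hsub (measure_union_null ?_ h2)
  rw [vol_tr]; exact h1

/-- Up to measure zero, `Ω + p ⊆ Ω`. -/
lemma key_pos (p : ℕ) (hp : 2 ≤ p) (Ω : Set ℝ) (htile : TilesByFin Ω p) :
    volume (tr (p : ℝ) Ω \ Ω) = 0 := by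
  obtain ⟨hdisj, hcover⟩ := htile
  set U : Set ℝ := ⋃ j ∈ Finset.range p, tr (j : ℝ) Ω with hU
  have hsub : tr (p : ℝ) Ω \ Ω ⊆
      Uᶜ ∪ ⋃ j ∈ Finset.range p, ((tr (j : ℝ) Ω ∩ tr (p : ℝ) Ω) \ Ω) := by
    intro x hx
    rcases hx with ⟨hx1, hx2⟩
    by_cases hxu : x ∈ U
    · rcases mem_iUnion₂.1 hxu with ⟨j, hj, hxj⟩
      exact Or.inr (mem_iUnion₂.2 ⟨j, hj, ⟨hxj, hx1⟩, hx2⟩)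
    · exact Or.inl hxu
  refine measure_mono_null hsub (measure_union_null hcover ?_)
  refine (measure_biUnion_null_iff ((Finset.range p).countable_toSet)).2 ?_
  intro j hj
  simp only [Finset.coe_range, Set.mem_Iio] at hj
  rcases Nat.eq_zero_or_pos j with rfl | hj0
  · -- j = 0 : (tr 0 Ω ∩ tr p Ω) \ Ω = ∅ since tr 0 Ω = Ω
    have : (tr ((0 : ℕ) : ℝ) Ω ∩ tr (p : ℝ) Ω) \ Ω = ∅ := by
      rw [Nat.cast_zero, tr_zero]
      ext x
      simp only [Set.mem_diff, Set.mem_inter_iff, Set.mem_empty_iff_false, iff_false]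
      tauto
    rw [this]; exact measure_empty
  · refine measure_mono_null diff_subset ?_
    have hjlt : j < p := hj
    have hcast : ((p - j : ℕ) : ℝ) = (p : ℝ) - j := by
      rw [Nat.cast_sub hjlt.le]
    have hEq : tr (j : ℝ) Ω ∩ tr (p : ℝ) Ω = tr (j : ℝ) (Ω ∩ tr ((p : ℝ) - j) Ω) := by
      ext x
      simp only [Set.mem_inter_iff, mem_tr]
      constructor
      · rintro ⟨h1, h2⟩
        refine ⟨h1, ?_⟩
        have : x - ↑j - ((p : ℝ) - j) = x - p := by ring
        rw [this]; exact h2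
      · rintro ⟨h1, h2⟩
        refine ⟨h1, ?_⟩
        have : x - (p : ℝ) = x - ↑j - ((p : ℝ) - j) := by ring
        rw [this]; exact h2
    rw [hEq, vol_tr]
    have := hdisj 0 (p - j) (by omega) (by omega) (by omega)
    rw [Nat.cast_zero, tr_zero, hcast] at this
    exact this

/-- Up to measure zero, `Ω - p ⊆ Ω`. -/
lemma key_neg (p : ℕ) (hp : 2 ≤ p) (Ω : Set ℝ) (htile : TilesByFin Ω p) :
    volume (tr (-(p : ℝ)) Ω \ Ω) = 0 := by
  obtain ⟨hdisj, hcover⟩ := htile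
  have hkey1 := key_pos p hp Ω ⟨hdisj, hcover⟩
  set U : Set ℝ := ⋃ j ∈ Finset.range p, tr (j : ℝ) Ω with hU
  -- first show Ω \ tr p Ω is null
  have hmain : volume (Ω \ tr (p : ℝ) Ω) = 0 := by
    have hsub : Ω \ tr (p : ℝ) Ω ⊆
        tr (p : ℝ) Uᶜ ∪ ⋃ j ∈ Finset.Ico 1 p,
          (tr (j : ℝ) (tr (p : ℝ) Ω \ Ω) ∪ (tr (j : ℝ) Ω ∩ Ω)) := by
      intro x hx
      rcases hx with ⟨hx1, hx2⟩
      by_cases hxu : x - (p : ℝ) ∈ U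
      · rcases mem_iUnion₂.1 hxu with ⟨j, hj, hxj⟩
        simp only [Finset.mem_range] at hj
        have hj0 : j ≠ 0 := by
          rintro rfl
          apply hx2
          rw [Nat.cast_zero, tr_zero] at hxj
          exact mem_tr.2 hxj
        refine Or.inr (mem_iUnion₂.2 ⟨j, Finset.mem_Ico.2 ⟨Nat.one_le_iff_ne_zero.2 hj0, hj⟩, ?_⟩)
        by_cases hxj' : x - (j : ℝ) ∈ Ω
        · exact Or.inr ⟨mem_tr.2 hxj', hx1⟩
        · refine Or.inl (mem_tr.2 ⟨mem_tr.2 ?_, hxj'⟩)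
          have : x - (j : ℝ) - (p : ℝ) = x - (p : ℝ) - j := by ring
          rw [this]; exact mem_tr.1 hxj
      · exact Or.inl (mem_tr.2 hxu)
    refine measure_mono_null hsub (measure_union_null ?_ ?_)
    · rw [vol_tr]; exact hcover
    · refine (measure_biUnion_null_iff ((Finset.Ico 1 p).countable_toSet)).2 ?_
      intro j hj
      simp only [Finset.coe_Ico, Set.mem_Ico] at hj
      refine measure_union_null ?_ ?_
      · rw [vol_tr]; exact hkey1
      · have := hdisj j 0 hj.2 (by omega) (by omega)
        rw [Nat.cast_zero, tr_zero] at this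
        exact this
  have hEq : tr (-(p : ℝ)) Ω \ Ω = tr (-(p : ℝ)) (Ω \ tr (p : ℝ) Ω) := by
    have e : ∀ x : ℝ, x - -(p : ℝ) - (p : ℝ) = x := fun x => by ring
    ext x
    simp only [Set.mem_diff, mem_tr, e]
  rw [hEq, vol_tr]
  exact hmain

theorem stmt0 (p : ℕ) (hp : 2 ≤ p) (Ω : Set ℝ) (hΩ : MeasurableSet Ω)
    (htile : TilesByFin Ω p) :
    ∀ k : ℤ, volume (tr ((p : ℝ) * k) Ω \ Ω) = 0 := by
  have h1 := key_pos p hp Ω htile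
  have h2 := key_neg p hp Ω htile
  intro k
  induction k using Int.induction_on with
  | zero => simp [tr_zero]
  | succ k ih =>
      have : ((p : ℝ) * ((k : ℤ) + 1 : ℤ)) = (p : ℝ) * k + p := by push_cast; ring
      rw [this]
      exact tr_step _ _ ih h1
  | pred k ih =>
      have : ((p : ℝ) * ((-(k : ℤ) - 1 : ℤ) : ℝ)) = (p : ℝ) * ((-(k : ℤ) : ℤ) : ℝ) + (-(p : ℝ)) := by
        push_cast; ring
      rw [this]
      exact tr_step _ _ ih h2
end
end

section
/- Let μ be a finite Radon measure on ℝ with total mass m, and let Λ ⊆ ℝ be countable. Then the exponentials {e^{2πiλx} : λ ∈ Λ} form an orthogonal basis of L²(μ) if and only if for every t ∈ ℝ, ∑_{λ∈Λ} |μ̂(t+λ)|² = m², where μ̂(t) = ∫ e^{−2πitx} dμ(x). -/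
open MeasureTheory Set Real
noncomputable section

/-- The exponential function `e_l(x) = e^{2πi l x}`. -/
def expl (l : ℝ) : ℝ → ℂ := fun x => Complex.exp ((2 * π * l * x : ℝ) * Complex.I)

/-- The Fourier transform of a measure: `μ̂(t) = ∫ e^{-2πitx} dμ(x)`. -/
def ftMeas (μ : Measure ℝ) (t : ℝ) : ℂ :=
  ∫ x, Complex.exp ((-(2 * π * t * x) : ℝ) * Complex.I) ∂μ

lemma continuous_expl (l : ℝ) : Continuous (expl l) := by
  unfold expl; fun_prop

lemma norm_expl (l x : ℝ) : ‖expl l x‖ = 1 := by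
  show ‖Complex.exp (((2 * π * l * x : ℝ) : ℂ) * Complex.I)‖ = 1
  rw [Complex.norm_exp_ofReal_mul_I]

lemma memL2 (μ : Measure ℝ) [IsFiniteMeasure μ] (l : ℝ) : MemLp (expl l) 2 μ :=
  MemLp.of_bound (continuous_expl l).aestronglyMeasurable 1
    (Filter.Eventually.of_forall fun x => (norm_expl l x).le)

/-- The exponential as an element of `L²(μ)`. -/
def EE (μ : Measure ℝ) [IsFiniteMeasure μ] (l : ℝ) : Lp ℂ 2 μ :=
  (memL2 μ l).toLp (expl l)

lemma conj_expl_mul (a b x : ℝ) :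
    (starRingEnd ℂ) (expl a x) * expl b x
      = Complex.exp ((-(2 * π * (a - b) * x) : ℝ) * Complex.I) := by
  rw [expl, expl, ← Complex.exp_conj, map_mul, Complex.conj_ofReal, Complex.conj_I,
    ← Complex.exp_add]
  congr 1
  push_cast
  ring

lemma inner_EE (μ : Measure ℝ) [IsFiniteMeasure μ] (a b : ℝ) :
    (inner ℂ (EE μ a) (EE μ b) : ℂ) = ftMeas μ (a - b) := by
  rw [MeasureTheory.L2.inner_def]
  rw [show ftMeas μ (a - b)
      = ∫ x, Complex.exp ((-(2 * π * (a - b) * x) : ℝ) * Complex.I) ∂μ from rfl]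
  apply integral_congr_ae
  filter_upwards [(memL2 μ a).coeFn_toLp, (memL2 μ b).coeFn_toLp] with x hx hy
  rw [EE, EE, hx, hy, RCLike.inner_apply, mul_comm, conj_expl_mul]

lemma ftMeas_zero (μ : Measure ℝ) [IsFiniteMeasure μ] :
    ftMeas μ 0 = ((μ univ).toReal : ℂ) := by
  simp [ftMeas, Measure.real]

lemma norm_EE_sq (μ : Measure ℝ) [IsFiniteMeasure μ] (l : ℝ) :
    ‖EE μ l‖ ^ 2 = (μ univ).toReal := by
  rw [@norm_sq_eq_re_inner ℂ, inner_EE, sub_self, ftMeas_zero]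
  simp

open FourierTransform in
set_option maxHeartbeats 1000000 in
lemma eq_zero_of_inner_EE_eq_zero (μ : Measure ℝ) [IsFiniteMeasure μ] (f : Lp ℂ 2 μ)
    (h : ∀ s : ℝ, (inner ℂ (EE μ s) f : ℂ) = 0) : f = 0 := by
  classical
  have h' : ∀ s : ℝ, ∫ x, Complex.exp (((2 * π * s * x : ℝ) : ℂ) * Complex.I) * f x ∂μ = 0 := by
    intro s
    have := h (-s)
    rw [MeasureTheory.L2.inner_def] at this
    rw [← this]
    apply integral_congr_ae
    filter_upwards [(memL2 μ (-s)).coeFn_toLp] with x hx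
    rw [EE, hx, RCLike.inner_apply, mul_comm]
    congr 2
    rw [expl, ← Complex.exp_conj, map_mul, Complex.conj_ofReal, Complex.conj_I]
    push_cast
    ring_nf
  have hgm : AEStronglyMeasurable (⇑f) μ := (Lp.memLp f).aestronglyMeasurable
  have hgi : Integrable (⇑f) μ := (Lp.memLp f).integrable one_le_two
  have hae : ∀ᵐ x ∂μ, (⇑f) x = 0 := by
    apply ae_eq_zero_of_integral_contDiff_smul_eq_zero hgi.locallyIntegrable
    intro φ hφ hφc
    set ψ : ℝ → ℂ := fun x => ((φ x : ℝ) : ℂ) with hψdef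
    have hψsm : ContDiff ℝ (⊤:ℕ∞) ψ := Complex.ofRealCLM.contDiff.comp hφ
    have hψc : HasCompactSupport ψ := HasCompactSupport.comp_left (g := fun r : ℝ => (r:ℂ)) hφc Complex.ofReal_zero
    have hψcont : Continuous ψ := hψsm.continuous
    have hψint : Integrable ψ volume := hψcont.integrable_of_hasCompactSupport hψc
    have hdecay : ∀ k n : ℕ, ∃ C : ℝ, ∀ x : ℝ, ‖x‖ ^ k * ‖iteratedFDeriv ℝ n ψ x‖ ≤ C := by
      intro k n
      have hc : Continuous fun x : ℝ => ‖x‖ ^ k * ‖iteratedFDeriv ℝ n ψ x‖ :=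
        ((continuous_norm.pow k).mul
          ((hψsm.continuous_iteratedFDeriv (by exact_mod_cast le_top)).norm))
      have hcs : HasCompactSupport fun x : ℝ => ‖x‖ ^ k * ‖iteratedFDeriv ℝ n ψ x‖ := by
        apply HasCompactSupport.mul_left
        exact (hψc.iteratedFDeriv n).norm
      obtain ⟨C, hC⟩ := hc.bounded_above_of_compact_support hcs
      exact ⟨C, fun x => (le_abs_self _).trans ((Real.norm_eq_abs _ ▸ hC x))⟩
    set Φ : SchwartzMap ℝ ℂ := ⟨ψ, hψsm, hdecay⟩ with hΦdef
    have hFint : Integrable (𝓕 ψ) volume := by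
      have : ⇑(𝓕 Φ : SchwartzMap ℝ ℂ) = 𝓕 ψ :=
        SchwartzMap.fourier_coe Φ
      rw [← this]
      exact SchwartzMap.integrable _
    have hinv : ∀ x : ℝ, ψ x = ∫ s : ℝ, 𝐞 (s * x) • 𝓕 ψ s := by
      intro x
      conv_lhs => rw [← hψcont.fourierInv_fourier_eq hψint hFint]
      rw [Real.fourierInv_eq]
      congr 1; funext v; rw [RCLike.inner_apply, conj_trivial, mul_comm]
    have key : ∫ x, ψ x * f x ∂μ = 0 := by
      have hsw : ∫ x, ∫ s, (𝐞 (s * x) • 𝓕 ψ s) * f x ∂volume ∂μ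
          = ∫ s, ∫ x, (𝐞 (s * x) • 𝓕 ψ s) * f x ∂μ ∂volume := by
        apply MeasureTheory.integral_integral_swap
        have hmeas : AEStronglyMeasurable
            (Function.uncurry fun x s => (𝐞 (s * x) • 𝓕 ψ s) * f x) (μ.prod volume) := by
          apply AEStronglyMeasurable.mul
          · apply AEStronglyMeasurable.smul
            · apply Continuous.aestronglyMeasurable
              exact (Real.continuous_fourierChar.comp (continuous_snd.mul continuous_fst)).subtype_val
            · exact hFint.1.comp_snd
          · exact hgm.comp_fst
        have hbd : Integrable (fun z : ℝ × ℝ => ‖f z.1‖ * ‖𝓕 ψ z.2‖) (μ.prod volume) :=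
          hgi.norm.mul_prod hFint.norm
        apply hbd.mono' hmeas
        apply Filter.Eventually.of_forall
        rintro ⟨x, s⟩
        simp only [Function.uncurry, Circle.smul_def, smul_eq_mul, norm_mul,
          Circle.norm_coe, one_mul]
        exact le_of_eq (mul_comm _ _)
      have h1 : ∫ x, ψ x * f x ∂μ = ∫ x, ∫ s, (𝐞 (s * x) • 𝓕 ψ s) * f x ∂volume ∂μ := by
        apply integral_congr_ae; apply Filter.Eventually.of_forall; intro x
        dsimp only
        conv_lhs => rw [hinv x]
        rw [← MeasureTheory.integral_mul_const]
      have h2 : ∀ s : ℝ, ∫ x, (𝐞 (s * x) • 𝓕 ψ s) * f x ∂μ = 0 := by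
        intro s
        have he : ∀ x : ℝ, (𝐞 (s * x) • 𝓕 ψ s) * f x
            = 𝓕 ψ s * (Complex.exp (((2 * π * s * x : ℝ) : ℂ) * Complex.I) * f x) := by
          intro x
          rw [Circle.smul_def, smul_eq_mul, Real.fourierChar_apply]
          push_cast
          ring_nf
        rw [integral_congr_ae (Filter.Eventually.of_forall he),
          MeasureTheory.integral_const_mul, h' s, mul_zero]
      rw [h1, hsw]
      simp only [h2, integral_zero]
    have heq : ∫ x, φ x • f x ∂μ = ∫ x, ψ x * f x ∂μ := by
      apply integral_congr_ae; apply Filter.Eventually.of_forall; intro x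
      exact Complex.real_smul
    rw [heq, key]
  exact Lp.eq_zero_iff_ae_eq_zero.mpr hae

lemma dense_EE (μ : Measure ℝ) [IsFiniteMeasure μ] :
    (Submodule.span ℂ (range (EE μ))).topologicalClosure = ⊤ := by
  rw [Submodule.topologicalClosure_eq_top_iff, Submodule.eq_bot_iff]
  intro f hf
  exact eq_zero_of_inner_EE_eq_zero μ f fun s =>
    (Submodule.mem_orthogonal _ f).1 hf _ (Submodule.subset_span (mem_range_self s))

lemma hb_parseval {ι H : Type*} [NormedAddCommGroup H] [InnerProductSpace ℂ H] [CompleteSpace H]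
    (b : HilbertBasis ι ℂ H) (x : H) : ∑' i, ‖(b.repr x : ι → ℂ) i‖ ^ 2 = ‖x‖ ^ 2 := by
  have h := lp.norm_rpow_eq_tsum (p := 2) (by norm_num) (b.repr x)
  rw [b.repr.norm_map] at h
  rw [show ((2:ENNReal).toReal) = ((2:ℕ):ℝ) by norm_num] at h
  simp_rw [Real.rpow_natCast] at h
  exact h.symm

lemma orthonormal_scaled (μ : Measure ℝ) [IsFiniteMeasure μ] {Λ : Set ℝ}
    (horth : ∀ a ∈ Λ, ∀ b ∈ Λ, a ≠ b → (inner ℂ (EE μ a) (EE μ b) : ℂ) = 0)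
    (hm0 : 0 < (μ univ).toReal) :
    Orthonormal ℂ (fun l : Λ =>
      (((Real.sqrt ((μ univ).toReal))⁻¹ : ℝ) : ℂ) • EE μ (l : ℝ)) := by
  classical
  have hc : 0 < Real.sqrt ((μ univ).toReal) := Real.sqrt_pos.mpr hm0
  rw [orthonormal_iff_ite]
  intro i j
  rw [inner_smul_left, inner_smul_right, Complex.conj_ofReal]
  by_cases hij : i = j
  · subst hij
    rw [if_pos rfl, inner_EE, sub_self, ftMeas_zero]
    have h1 : (Real.sqrt ((μ univ).toReal))⁻¹ *
        ((Real.sqrt ((μ univ).toReal))⁻¹ * (μ univ).toReal) = 1 := by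
      rw [← Real.mul_self_sqrt hm0.le]
      field_simp
      rw [Real.sqrt_sq hc.le]
    calc (((Real.sqrt ((μ univ).toReal))⁻¹ : ℝ) : ℂ) *
          ((((Real.sqrt ((μ univ).toReal))⁻¹ : ℝ) : ℂ) * ((μ univ).toReal : ℂ))
        = (((Real.sqrt ((μ univ).toReal))⁻¹ *
            ((Real.sqrt ((μ univ).toReal))⁻¹ * (μ univ).toReal) : ℝ) : ℂ) := by push_cast; ring
      _ = 1 := by rw [h1]; norm_num
  · rw [if_neg hij, horth i i.2 j j.2 (fun hq => hij (Subtype.ext hq)), mul_zero, mul_zero]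

/-- `Λ` is a spectrum for `μ`: the exponentials `e_λ`, `λ ∈ Λ`, form an
orthogonal family in `L²(μ)` whose span is dense, i.e. an orthogonal basis. -/
def IsSpectrum (μ : Measure ℝ) (Λ : Set ℝ) : Prop :=
  ∃ hmem : ∀ l : ℝ, MemLp (expl l) 2 μ,
    (∀ l ∈ Λ, ∀ l' ∈ Λ, l ≠ l' →
      (inner ℂ ((hmem l).toLp (expl l)) ((hmem l').toLp (expl l')) : ℂ) = 0) ∧
    (Submodule.span ℂ ((fun l : ℝ => (hmem l).toLp (expl l)) '' Λ)).topologicalClosure = ⊤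

theorem stmt4 (μ : Measure ℝ) [IsFiniteMeasure μ] (m : ℝ)
    (hm : m = (μ univ).toReal) (Λ : Set ℝ) (hΛ : Λ.Countable) :
    IsSpectrum μ Λ ↔ ∀ t : ℝ, ∑' l : Λ, ‖ftMeas μ (t + l)‖ ^ 2 = m ^ 2 := by
  subst hm
  rcases eq_or_lt_of_le (ENNReal.toReal_nonneg : (0:ℝ) ≤ (μ univ).toReal) with hm0 | hm0
  · -- trivial case : μ = 0
    have hμ : μ = 0 := by
      have h1 : μ univ = 0 :=
        (Or.resolve_right (ENNReal.toReal_eq_zero_iff _ |>.mp hm0.symm) (measure_ne_top μ univ))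
      exact Measure.measure_univ_eq_zero.mp h1
    subst hμ
    have hz : ∀ g : Lp ℂ 2 (0 : Measure ℝ), g = 0 := fun g =>
      Lp.eq_zero_iff_ae_eq_zero.mpr (by rw [MeasureTheory.ae_zero]; exact Filter.eventually_bot)
    constructor
    · intro _ t
      have hft : ∀ r : ℝ, ftMeas 0 r = 0 := fun r => integral_zero_measure _
      simp [hft]
    · intro _
      refine ⟨memL2 0, fun a _ b _ _ => ?_, ?_⟩
      · rw [hz ((memL2 0 a).toLp (expl a)), inner_zero_left]
      · rw [eq_top_iff]
        intro x _
        exact hz x ▸ Submodule.zero_mem _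
  · constructor
    · -- forward direction
      rintro ⟨hmem, horth', hdense'⟩ t
      have horth : ∀ a ∈ Λ, ∀ b ∈ Λ, a ≠ b → (inner ℂ (EE μ a) (EE μ b) : ℂ) = 0 :=
        fun a ha b hb hab => horth' a ha b hb hab
      have hdense : (Submodule.span ℂ (EE μ '' Λ)).topologicalClosure = ⊤ := hdense'
      have hc : 0 < Real.sqrt ((μ univ).toReal) := Real.sqrt_pos.mpr hm0
      have honb := orthonormal_scaled μ horth hm0
      have hsp : ⊤ ≤ (Submodule.span ℂ (range (fun l : Λ =>
          (((Real.sqrt ((μ univ).toReal))⁻¹ : ℝ) : ℂ) • EE μ (l : ℝ)))).topologicalClosure := by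
        have h1 : range (fun l : Λ =>
            (((Real.sqrt ((μ univ).toReal))⁻¹ : ℝ) : ℂ) • EE μ (l : ℝ))
            = (fun y => (((Real.sqrt ((μ univ).toReal))⁻¹ : ℝ) : ℂ) • y) '' (EE μ '' Λ) := by
          rw [show (fun l : Λ => (((Real.sqrt ((μ univ).toReal))⁻¹ : ℝ) : ℂ) • EE μ (l : ℝ))
              = (fun y => (((Real.sqrt ((μ univ).toReal))⁻¹ : ℝ) : ℂ) • y) ∘ (EE μ) ∘
                (Subtype.val) from rfl, range_comp, range_comp, Subtype.range_coe]
        rw [h1, image_smul, Submodule.span_smul_eq_of_isUnit, hdense]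
        exact IsUnit.mk0 _ (Complex.ofReal_ne_zero.mpr (inv_ne_zero hc.ne'))
      have hpars := hb_parseval (HilbertBasis.mk honb hsp) (EE μ (-t))
      have hcoef : ∀ l : Λ, ((HilbertBasis.mk honb hsp).repr (EE μ (-t)) : Λ → ℂ) l
          = (((Real.sqrt ((μ univ).toReal))⁻¹ : ℝ) : ℂ) * ftMeas μ (t + l) := by
        intro l
        have e1 : ((HilbertBasis.mk honb hsp).repr (EE μ (-t)) : Λ → ℂ) l
            = inner ℂ ((((Real.sqrt ((μ univ).toReal))⁻¹ : ℝ) : ℂ) • EE μ (l : ℝ)) (EE μ (-t)) := by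
          rw [HilbertBasis.repr_apply_apply]
          congr 1
          convert honb.linearIsometryEquiv_symm_apply_single_one hsp l using 2
          congr!
          rw [HilbertBasis.coe_mk, honb.linearIsometryEquiv_symm_apply_single_one hsp l]
        rw [e1, inner_smul_left, Complex.conj_ofReal, inner_EE]
        congr 2
        ring
      rw [norm_EE_sq] at hpars
      simp_rw [hcoef, norm_mul, mul_pow] at hpars
      have hnc : ‖(((Real.sqrt ((μ univ).toReal))⁻¹ : ℝ) : ℂ)‖ ^ 2 = ((μ univ).toReal)⁻¹ := by
        rw [Complex.norm_real, Real.norm_eq_abs, abs_of_pos (inv_pos.mpr hc), inv_pow,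
          Real.sq_sqrt hm0.le]
      simp_rw [hnc] at hpars
      rw [tsum_mul_left] at hpars
      have hM : (μ univ).toReal ≠ 0 := hm0.ne'
      rw [sq]
      field_simp at hpars
      exact hpars.trans (sq _)
    · -- converse direction
      intro h
      have horthR : ∀ a ∈ Λ, ∀ b ∈ Λ, a ≠ b → (inner ℂ (EE μ a) (EE μ b) : ℂ) = 0 := by
        intro a ha b hb hab
        rw [inner_EE]
        have h1 := h (-b)
        have hsum : Summable (fun l : Λ => ‖ftMeas μ (-b + (l : ℝ))‖ ^ 2) := by
          by_contra hs
          rw [tsum_eq_zero_of_not_summable hs] at h1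
          exact (pow_ne_zero 2 hm0.ne') h1.symm
        have hne : (⟨b, hb⟩ : Λ) ≠ ⟨a, ha⟩ := fun hq => hab (congrArg Subtype.val hq).symm
        have hle := Summable.sum_le_tsum ({⟨b, hb⟩, ⟨a, ha⟩} : Finset Λ) (fun i _ => by positivity) hsum
        rw [h1, Finset.sum_pair hne] at hle
        have e1 : ‖ftMeas μ (-b + b)‖ ^ 2 = ((μ univ).toReal) ^ 2 := by
          rw [neg_add_cancel, ftMeas_zero, Complex.norm_real, Real.norm_eq_abs,
            abs_of_pos hm0]
        rw [e1] at hle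
        have h2 : ‖ftMeas μ (-b + a)‖ ^ 2 = 0 :=
          le_antisymm (by linarith) (by positivity)
        have h3 : ftMeas μ (-b + a) = 0 :=
          norm_eq_zero.mp ((pow_eq_zero_iff (two_ne_zero)).mp h2)
        rw [sub_eq_neg_add]
        exact h3
      refine ⟨memL2 μ, fun a ha b hb hab => horthR a ha b hb hab, ?_⟩
      have honb := orthonormal_scaled μ horthR hm0
      have hKc : IsClosed ((Submodule.span ℂ
          ((fun l : ℝ => (memL2 μ l).toLp (expl l)) '' Λ)).topologicalClosure :
          Set (Lp ℂ 2 μ)) := Submodule.isClosed_topologicalClosure _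
      have hEK : ∀ σ : ℝ, EE μ σ ∈ (Submodule.span ℂ
          ((fun l : ℝ => (memL2 μ l).toLp (expl l)) '' Λ)).topologicalClosure := by
        intro σ
        set K := (Submodule.span ℂ
          ((fun l : ℝ => (memL2 μ l).toLp (expl l)) '' Λ)).topologicalClosure with hKdef
        set u : Λ → Lp ℂ 2 μ := fun l =>
          (((Real.sqrt ((μ univ).toReal))⁻¹ : ℝ) : ℂ) • EE μ (l : ℝ) with hu
        have huK : ∀ l : Λ, u l ∈ K := fun l =>
          K.smul_mem _ ((Submodule.le_topologicalClosure _)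
            (Submodule.subset_span (mem_image_of_mem _ l.2)))
        set cl : Λ → ℂ := fun l => inner ℂ (u l) (EE μ σ) with hcl
        have hsum2 : Summable (fun l : Λ => ‖cl l‖ ^ 2) :=
          honb.inner_products_summable (EE μ σ)
        have hmem2 : Memℓp cl 2 := memℓp_gen (by
          rw [show ((2:ENNReal).toReal) = ((2:ℕ):ℝ) by norm_num]
          simp_rw [Real.rpow_natCast]
          exact hsum2)
        have hgs : HasSum (fun l : Λ => cl l • u l)
            (honb.orthogonalFamily.linearIsometry (⟨cl, hmem2⟩ : lp (fun _ : Λ => ℂ) 2)) := by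
          have h5 := honb.orthogonalFamily.hasSum_linearIsometry (⟨cl, hmem2⟩ : lp (fun _ : Λ => ℂ) 2)
          simpa [LinearIsometry.toSpanSingleton_apply] using h5
        set g := honb.orthogonalFamily.linearIsometry (⟨cl, hmem2⟩ : lp (fun _ : Λ => ℂ) 2)
          with hgdef
        have hgK : g ∈ K := by
          refine hKc.mem_of_tendsto hgs ?_
          apply Filter.Eventually.of_forall
          intro s
          exact Submodule.sum_mem K (fun l _ => K.smul_mem _ (huK l))
        have hsum_eq : ∑' l : Λ, ‖cl l‖ ^ 2 = (μ univ).toReal := by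
          have h6 : ∀ l : Λ, ‖cl l‖ ^ 2
              = ((μ univ).toReal)⁻¹ * ‖ftMeas μ (-σ + (l : ℝ))‖ ^ 2 := by
            intro l
            rw [hcl]
            dsimp only
            rw [hu]
            dsimp only
            rw [inner_smul_left, Complex.conj_ofReal, inner_EE, norm_mul, mul_pow]
            have e2 : ‖(((Real.sqrt ((μ univ).toReal))⁻¹ : ℝ) : ℂ)‖ ^ 2
                = ((μ univ).toReal)⁻¹ := by
              rw [Complex.norm_real, Real.norm_eq_abs,
                abs_of_pos (inv_pos.mpr (Real.sqrt_pos.mpr hm0)), inv_pow,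
                Real.sq_sqrt hm0.le]
            rw [e2]
            congr 3
            ring
          rw [tsum_congr h6, tsum_mul_left, h (-σ), sq, ← mul_assoc,
            inv_mul_cancel₀ hm0.ne', one_mul]
        have hfg : (inner ℂ (EE μ σ) g : ℂ) = (((μ univ).toReal : ℝ) : ℂ) := by
          have h4 : HasSum (fun l : Λ => (inner ℂ (EE μ σ) (cl l • u l) : ℂ))
              (inner ℂ (EE μ σ) g) := (innerSL ℂ (EE μ σ)).hasSum hgs
          have h5 : ∀ l : Λ, (inner ℂ (EE μ σ) (cl l • u l) : ℂ) = ((‖cl l‖ ^ 2 : ℝ) : ℂ) := by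
            intro l
            rw [inner_smul_right, ← inner_conj_symm (EE μ σ) (u l)]
            rw [show (inner ℂ (u l) (EE μ σ) : ℂ) = cl l from rfl]
            rw [Complex.mul_conj, Complex.normSq_eq_norm_sq]
          rw [← h4.tsum_eq, tsum_congr h5, ← Complex.ofReal_tsum, hsum_eq]
        have hnormg : ‖g‖ ^ 2 = (μ univ).toReal := by
          have h7 : ‖g‖ = ‖(⟨cl, hmem2⟩ : lp (fun _ : Λ => ℂ) 2)‖ :=
            honb.orthogonalFamily.linearIsometry.norm_map _
          have h8 := lp.norm_rpow_eq_tsum (p := 2) (by norm_num)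
            (⟨cl, hmem2⟩ : lp (fun _ : Λ => ℂ) 2)
          rw [show ((2:ENNReal).toReal) = ((2:ℕ):ℝ) by norm_num] at h8
          simp_rw [Real.rpow_natCast] at h8
          rw [h7, h8]
          exact hsum_eq
        have hnormf : ‖EE μ σ‖ ^ 2 = (μ univ).toReal := norm_EE_sq μ σ
        have hzero : ‖EE μ σ - g‖ ^ 2 = 0 := by
          rw [@norm_sub_sq ℂ, hnormf, hnormg, hfg]
          simp only [RCLike.re_to_complex, Complex.ofReal_re]
          ring_nf
        have hfgeq : EE μ σ = g := by
          have h9 : ‖EE μ σ - g‖ = 0 := (pow_eq_zero_iff (two_ne_zero)).mp hzero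
          have h10 : EE μ σ - g = 0 := norm_eq_zero.mp h9
          exact sub_eq_zero.mp h10
        exact hfgeq ▸ hgK
      have hle : (Submodule.span ℂ (range (EE μ))).topologicalClosure
          ≤ (Submodule.span ℂ
            ((fun l : ℝ => (memL2 μ l).toLp (expl l)) '' Λ)).topologicalClosure :=
        Submodule.topologicalClosure_minimal _
          (Submodule.span_le.mpr (range_subset_iff.mpr hEK)) hKc
      exact eq_top_iff.mpr (dense_EE μ ▸ hle)
end
end
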